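/- Decentralized Muon without speedup: consider the scalar recursion x_{k+1} = x_k(1 − α/√(x_k² + σ²)) with σ > 0 and 0 < α < σ. Then for every k, |x_{k+1}| ≥ (1 − α/σ)|x_k|, and hence |x_k| ≥ (1 − α/σ)^k |x_0|; consequently, achieving |x_T| ≤ ε|x_0| (with x_0 ≠ 0, 0 < ε < 1) requires T ≥ log(1/ε)/log(1/(1 − α/σ)). -/

import Mathlib

open Real

lemma div_sqrt_sq_add_sq_le {α σ : ℝ} (hα : 0 ≤ α) (hσ : 0 < σ) (t : ℝ) :
    α / √(t ^ 2 + σ ^ 2) ≤ α / σ :=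
  div_le_div_of_nonneg_left hα hσ <|
    le_sqrt_of_sq_le (le_add_of_nonneg_left (sq_nonneg t))

lemma one_sub_div_mul_abs_le_abs_mul {α σ : ℝ} (hα : 0 ≤ α) (hασ : α ≤ σ) (hσ : 0 < σ)
    (t : ℝ) : (1 - α / σ) * |t| ≤ |t * (1 - α / √(t ^ 2 + σ ^ 2))| := by
  have hfactor : 1 - α / σ ≤ 1 - α / √(t ^ 2 + σ ^ 2) :=
    sub_le_sub_left (div_sqrt_sq_add_sq_le hα hσ t) 1
  have hc : 0 ≤ 1 - α / σ := sub_nonneg.2 ((div_le_one hσ).2 hασ)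
  rw [abs_mul, abs_of_nonneg (hc.trans hfactor), mul_comm]
  exact mul_le_mul_of_nonneg_left hfactor (abs_nonneg t)

lemma log_inv_div_log_inv_le_of_pow_le {c ε : ℝ} {T : ℕ} (hc0 : 0 < c) (hc1 : c < 1)
    (h : c ^ T ≤ ε) : log (1 / ε) / log (1 / c) ≤ T := by
  have hlogc : log c < 0 := log_neg hc0 hc1
  have hlog : T * log c ≤ log ε := by
    simpa only [log_pow] using log_le_log (pow_pos hc0 T) h
  rw [one_div, one_div, log_inv, log_inv, div_le_iff₀ (neg_pos.2 hlogc)]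
  linarith

/-- Decentralized Muon without speedup: for the recursion
`x_{k+1} = x_k (1 − α/√(x_k² + σ²))` with `0 < α < σ`, one has
`|x_{k+1}| ≥ (1 − α/σ)|x_k|`, hence `|x_k| ≥ (1 − α/σ)^k |x_0|`, and achieving
`|x_T| ≤ ε |x_0|` requires `T ≥ log(1/ε) / log(1/(1 − α/σ))`. -/
theorem dsgd_muon_no_speedup (σ α : ℝ) (hσ : 0 < σ) (hα0 : 0 < α) (hασ : α < σ)
    (x : ℕ → ℝ)
    (hrec : ∀ k, x (k + 1) = x k * (1 - α / Real.sqrt ((x k) ^ 2 + σ ^ 2))) :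
    (∀ k, (1 - α / σ) * |x k| ≤ |x (k + 1)|) ∧
    (∀ k, (1 - α / σ) ^ k * |x 0| ≤ |x k|) ∧
    (∀ (T : ℕ) (ε : ℝ), x 0 ≠ 0 → 0 < ε → ε < 1 → |x T| ≤ ε * |x 0| →
      Real.log (1 / ε) / Real.log (1 / (1 - α / σ)) ≤ T) := by
  have hc0 : 0 < 1 - α / σ := sub_pos.2 ((div_lt_one hσ).2 hασ)
  have hc1 : 1 - α / σ < 1 := sub_lt_self 1 (div_pos hα0 hσ)
  have step (k : ℕ) : (1 - α / σ) * |x k| ≤ |x (k + 1)| := by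
    rw [hrec k]
    exact one_sub_div_mul_abs_le_abs_mul hα0.le hασ.le hσ (x k)
  have geom (k : ℕ) : (1 - α / σ) ^ k * |x 0| ≤ |x k| :=
    geom_le hc0.le k fun j _ => step j
  refine ⟨step, geom, fun T ε hx0 _ _ hT => ?_⟩
  have hpow : (1 - α / σ) ^ T ≤ ε :=
    le_of_mul_le_mul_right ((geom T).trans hT) (abs_pos.2 hx0)
  exact log_inv_div_log_inv_le_of_pow_le hc0 hc1 hpow
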